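/- arXiv:1610.03972 — 5 statements merged into one kernel-verified Lean document; each statement's English description precedes it below -/
import Mathlib

section
/- Let G be a graph without isolated vertices such that for every non-maximum independent set A of G and every vertex v not in A, there exists a maximum independent set S of G with A ⊆ S and v ∉ S. Then for every vertex v of G, the graph G - v is well-covered. -/
/-!
Applied to `A = ∅`, the hypothesis gives a maximum independent set of `G` avoiding `v`, so
`α(G - v) = α(G)`. Hence a non-maximum independent set of `G - v` is non-maximum in `G`, and the
hypothesis extends it inside `G - v`: it is not maximal there.
-/

open Finset

/-- A finset of vertices is independent: no two of its members are adjacent. -/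
def IndepSet {V : Type*} (G : SimpleGraph V) (A : Finset V) : Prop :=
  ∀ u ∈ A, ∀ v ∈ A, ¬ G.Adj u v

open scoped Classical in
/-- Maximum size of an independent set contained in `s` (independence number of `G[s]`). -/
noncomputable def alphaOn {V : Type*} [Fintype V] (G : SimpleGraph V) (s : Finset V) : ℕ :=
  ((s.powerset).filter (fun A => IndepSet G A)).sup Finset.card

/-- The independence number of `G`. -/
noncomputable def alpha {V : Type*} [Fintype V] (G : SimpleGraph V) : ℕ :=
  alphaOn G Finset.univ

/-- The induced subgraph `G[s]` is well-covered: every maximal independent subset of `s`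
has maximum cardinality. -/
def WellCoveredOn {V : Type*} [Fintype V] (G : SimpleGraph V) (s : Finset V) : Prop :=
  ∀ A ⊆ s, IndepSet G A →
    (∀ B ⊆ s, IndepSet G B → A ⊆ B → A = B) → A.card = alphaOn G s

/-- `G` is well-covered. -/
def WellCovered {V : Type*} [Fintype V] (G : SimpleGraph V) : Prop :=
  WellCoveredOn G Finset.univ

open scoped Classical in
/-- The open neighborhood `N(A)`: vertices having a neighbor in `A`. -/
noncomputable def nbhd {V : Type*} [Fintype V] (G : SimpleGraph V) (A : Finset V) : Finset V :=
  Finset.univ.filter (fun v => ∃ u ∈ A, G.Adj u v)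

/-- The closed neighborhood `N[A] = A ∪ N(A)`. -/
noncomputable def closedNbhd {V : Type*} [Fintype V] [DecidableEq V] (G : SimpleGraph V) (A : Finset V) :
    Finset V :=
  A ∪ nbhd G A

/-- The induced subgraph `G[s]` is in class `W₂`: every two disjoint independent subsets of `s`
extend to two disjoint maximum independent subsets of `s`. -/
def W2On {V : Type*} [Fintype V] (G : SimpleGraph V) (s : Finset V) : Prop :=
  ∀ A ⊆ s, ∀ B ⊆ s, IndepSet G A → IndepSet G B → Disjoint A B →
    ∃ S₁ ⊆ s, ∃ S₂ ⊆ s, IndepSet G S₁ ∧ IndepSet G S₂ ∧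
      S₁.card = alphaOn G s ∧ S₂.card = alphaOn G s ∧ Disjoint S₁ S₂ ∧ A ⊆ S₁ ∧ B ⊆ S₂

/-- `G` belongs to class `W₂`. -/
def W2 {V : Type*} [Fintype V] (G : SimpleGraph V) : Prop :=
  W2On G Finset.univ

section

variable {V : Type*} {G : SimpleGraph V}

lemma indepSet_empty : IndepSet G ∅ := by
  simp [IndepSet]

lemma indepSet_singleton (v : V) : IndepSet G {v} := by
  simp [IndepSet]

variable [Fintype V]

lemma IndepSet.card_le_alphaOn {s A : Finset V} (hAs : A ⊆ s) (hA : IndepSet G A) :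
    A.card ≤ alphaOn G s := by
  classical
  exact Finset.le_sup (mem_filter.mpr ⟨mem_powerset.mpr hAs, hA⟩)

lemma alphaOn_mono {s t : Finset V} (hst : s ⊆ t) : alphaOn G s ≤ alphaOn G t := by
  classical
  refine Finset.sup_le fun A hA => ?_
  obtain ⟨hAs, hA⟩ := mem_filter.mp hA
  exact hA.card_le_alphaOn ((mem_powerset.mp hAs).trans hst)

lemma alpha_pos (v : V) : 0 < alpha G := by
  have := (indepSet_singleton (G := G) v).card_le_alphaOn (subset_univ _)
  rwa [card_singleton] at this

lemma wellCoveredOn_of_forall_extend {s : Finset V}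
    (hext : ∀ A ⊆ s, IndepSet G A → A.card < alphaOn G s →
      ∃ S ⊆ s, IndepSet G S ∧ S.card = alphaOn G s ∧ A ⊆ S) :
    WellCoveredOn G s := by
  intro A hAs hA hmax
  refine (hA.card_le_alphaOn hAs).eq_or_lt.resolve_right fun hlt => hlt.ne ?_
  obtain ⟨S, hSs, hS, hScard, hAS⟩ := hext A hAs hA hlt
  rw [hmax S hSs hS hAS, hScard]

end

theorem stmt1_general {V : Type*} [Fintype V] [DecidableEq V] (G : SimpleGraph V)
    (h : ∀ A : Finset V, IndepSet G A → A.card < alpha G →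
      ∀ v ∉ A, ∃ S : Finset V, IndepSet G S ∧ S.card = alpha G ∧ A ⊆ S ∧ v ∉ S) :
    ∀ v : V, WellCoveredOn G (Finset.univ.erase v) := by
  intro v
  have hα : alphaOn G (univ.erase v) = alpha G := by
    obtain ⟨T, hT, hTcard, -, hvT⟩ :=
      h ∅ indepSet_empty (by rw [card_empty]; exact alpha_pos v) v (notMem_empty v)
    exact le_antisymm (alphaOn_mono (subset_univ _))
      (hTcard ▸ hT.card_le_alphaOn (subset_erase.mpr ⟨subset_univ T, hvT⟩))
  refine wellCoveredOn_of_forall_extend fun A hAs hA hlt => ?_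
  rw [hα] at hlt ⊢
  obtain ⟨S, hS, hScard, hAS, hvS⟩ := h A hA hlt v (subset_erase.mp hAs).2
  exact ⟨S, subset_erase.mpr ⟨subset_univ S, hvS⟩, hS, hScard, hAS⟩

/-- If G has no isolated vertices and every non-maximum independent set A and vertex v ∉ A
admit a maximum independent set S with A ⊆ S and v ∉ S, then G - v is well-covered
for every vertex v. -/
theorem stmt1 {V : Type*} [Fintype V] [DecidableEq V] (G : SimpleGraph V)
    (hiso : ∀ v : V, ∃ u, G.Adj v u)
    (h : ∀ A : Finset V, IndepSet G A → A.card < alpha G →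
      ∀ v ∉ A, ∃ S : Finset V, IndepSet G S ∧ S.card = alpha G ∧ A ⊆ S ∧ v ∉ S) :
    ∀ v : V, WellCoveredOn G (Finset.univ.erase v) :=
  stmt1_general G h
end

section
/- Let G be a graph in class W_2 (every two disjoint independent sets of G extend to two disjoint maximum independent sets). Then for every non-maximum independent set S of G, the graph G - N[S] also belongs to W_2. -/
open Finset

/-!
An independent set of `G - N[S]` stays independent when `S` is added to it, and removing `S`
from a maximum independent set of `G` containing `S` leaves a maximum independent set of
`G - N[S]`. Given disjoint independent sets `A, B` of `G - N[S]`, one application of `W₂` to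
`A ∪ S` and `B` yields `S₁ ⊇ A` avoiding `B`; since the maximum set containing `B` need not
contain `S`, a second application, to `B ∪ S` and `S₁`, yields `S₂ ⊇ B` avoiding `S₁`.
-/

theorem IndepSet.mono {V : Type*} {G : SimpleGraph V} {A B : Finset V} (hAB : A ⊆ B)
    (hB : IndepSet G B) : IndepSet G A :=
  fun u hu v hv => hB u (hAB hu) v (hAB hv)

section

variable {V : Type*} [Fintype V] {G : SimpleGraph V}

theorem card_le_alphaOn {s T : Finset V} (hTs : T ⊆ s) (hT : IndepSet G T) :
    T.card ≤ alphaOn G s := by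
  classical
  unfold alphaOn
  exact le_sup (mem_filter.2 ⟨mem_powerset.2 hTs, hT⟩)

theorem card_le_alpha {T : Finset V} (hT : IndepSet G T) : T.card ≤ alpha G :=
  card_le_alphaOn (subset_univ T) hT

variable [DecidableEq V] {S : Finset V}

theorem mem_univ_sdiff_closedNbhd {x : V} :
    x ∈ univ \ closedNbhd G S ↔ x ∉ S ∧ ∀ u ∈ S, ¬ G.Adj u x := by
  simp [closedNbhd, nbhd]

theorem disjoint_of_subset_univ_sdiff_closedNbhd {T : Finset V}
    (hT : T ⊆ univ \ closedNbhd G S) : Disjoint T S :=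
  disjoint_left.2 fun _ hx => (mem_univ_sdiff_closedNbhd.1 (hT hx)).1

theorem IndepSet.union_of_subset_univ_sdiff_closedNbhd {T : Finset V}
    (hTs : T ⊆ univ \ closedNbhd G S) (hT : IndepSet G T) (hS : IndepSet G S) :
    IndepSet G (T ∪ S) := by
  intro u hu v hv hadj
  rcases mem_union.1 hu with hu | hu <;> rcases mem_union.1 hv with hv | hv
  · exact hT u hu v hv hadj
  · exact (mem_univ_sdiff_closedNbhd.1 (hTs hu)).2 v hv hadj.symm
  · exact (mem_univ_sdiff_closedNbhd.1 (hTs hv)).2 u hu hadj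
  · exact hS u hu v hv hadj

theorem sdiff_subset_univ_sdiff_closedNbhd {M : Finset V} (hM : IndepSet G M) (hSM : S ⊆ M) :
    M \ S ⊆ univ \ closedNbhd G S := by
  intro x hx
  rw [mem_sdiff] at hx
  exact mem_univ_sdiff_closedNbhd.2 ⟨hx.2, fun u hu => hM u (hSM hu) x hx.1⟩

theorem alphaOn_univ_sdiff_closedNbhd_add_card_le (hS : IndepSet G S) :
    alphaOn G (univ \ closedNbhd G S) + S.card ≤ alpha G := by
  classical
  suffices h : alphaOn G (univ \ closedNbhd G S) ≤ alpha G - S.card by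
    have := card_le_alpha hS
    omega
  unfold alphaOn
  refine Finset.sup_le fun T hT => ?_
  rw [mem_filter, mem_powerset] at hT
  have hTS := card_le_alpha (hT.2.union_of_subset_univ_sdiff_closedNbhd hT.1 hS)
  rw [card_union_of_disjoint (disjoint_of_subset_univ_sdiff_closedNbhd hT.1)] at hTS
  omega

theorem card_sdiff_eq_alphaOn_univ_sdiff_closedNbhd {M : Finset V} (hS : IndepSet G S)
    (hM : IndepSet G M) (hMcard : M.card = alpha G) (hSM : S ⊆ M) :
    (M \ S).card = alphaOn G (univ \ closedNbhd G S) := by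
  refine le_antisymm
    (card_le_alphaOn (sdiff_subset_univ_sdiff_closedNbhd hM hSM) (hM.mono sdiff_subset)) ?_
  have := alphaOn_univ_sdiff_closedNbhd_add_card_le hS
  rw [card_sdiff_of_subset hSM]
  omega

theorem W2.exists_extension_in_univ_sdiff_closedNbhd (h : W2 G) (hS : IndepSet G S)
    {A C : Finset V} (hA : A ⊆ univ \ closedNbhd G S) (hC : C ⊆ univ \ closedNbhd G S)
    (hAi : IndepSet G A) (hCi : IndepSet G C) (hAC : Disjoint A C) :
    ∃ T ⊆ univ \ closedNbhd G S, IndepSet G T ∧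
      T.card = alphaOn G (univ \ closedNbhd G S) ∧ Disjoint T C ∧ A ⊆ T := by
  have hASC : Disjoint (A ∪ S) C :=
    disjoint_union_left.2 ⟨hAC, (disjoint_of_subset_univ_sdiff_closedNbhd hC).symm⟩
  obtain ⟨M₁, -, M₂, -, hM₁, -, hM₁card, -, hM₁₂, hASM₁, hCM₂⟩ :=
    h (A ∪ S) (subset_univ _) C (subset_univ _)
      (hAi.union_of_subset_univ_sdiff_closedNbhd hA hS) hCi hASC
  have hSM₁ : S ⊆ M₁ := subset_union_right.trans hASM₁
  refine ⟨M₁ \ S, sdiff_subset_univ_sdiff_closedNbhd hM₁ hSM₁, hM₁.mono sdiff_subset,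
    card_sdiff_eq_alphaOn_univ_sdiff_closedNbhd hS hM₁ hM₁card hSM₁,
    (hM₁₂.mono_right hCM₂).mono_left sdiff_subset, ?_⟩
  exact subset_sdiff.2 ⟨subset_union_left.trans hASM₁, disjoint_of_subset_univ_sdiff_closedNbhd hA⟩

end

theorem stmt3_general {V : Type*} [Fintype V] [DecidableEq V] (G : SimpleGraph V) (h : W2 G)
    (S : Finset V) (hS : IndepSet G S) :
    W2On G (Finset.univ \ closedNbhd G S) := by
  intro A hA B hB hAi hBi hAB
  obtain ⟨S₁, hS₁, hS₁i, hS₁card, hS₁B, hAS₁⟩ :=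
    h.exists_extension_in_univ_sdiff_closedNbhd hS hA hB hAi hBi hAB
  obtain ⟨S₂, hS₂, hS₂i, hS₂card, hS₂S₁, hBS₂⟩ :=
    h.exists_extension_in_univ_sdiff_closedNbhd hS hB hS₁ hBi hS₁i hS₁B.symm
  exact ⟨S₁, hS₁, S₂, hS₂, hS₁i, hS₂i, hS₁card, hS₂card, hS₂S₁.symm, hAS₁, hBS₂⟩

/-- If G ∈ W₂ and S is a non-maximum independent set, then G - N[S] ∈ W₂. -/
theorem stmt3 {V : Type*} [Fintype V] [DecidableEq V] (G : SimpleGraph V) (h : W2 G)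
    (S : Finset V) (hS : IndepSet G S) (hlt : S.card < alpha G) :
    W2On G (Finset.univ \ closedNbhd G S) :=
  stmt3_general G h S hS
end

section
/- K_2 is the only connected bipartite graph in class W_2: if G is connected, bipartite and belongs to W_2, then G is isomorphic to K_2. -/
/-!
Let `X, Xᶜ` be a bipartition of `G`. Applying `W₂` to `∅, ∅` gives two disjoint maximum independent
sets, so `2α ≤ n`; since `|X|, |Xᶜ| ≤ α`, both sides have exactly `α` vertices. For `v ∈ X`,
apply `W₂` to `{v}` and `X \ {v}`: the maximum independent set extending `X \ {v}` avoids `v`,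
so it contains a vertex `y ∉ X`, all of whose neighbours lie in `X` and hence equal `v`. Doing
the same for `y ∈ Xᶜ` shows that `v` and `y` are each other's only neighbours, and connectivity
forces `V = {v, y}`.
-/

open Finset

namespace IndepSet

variable {V : Type*} {G : SimpleGraph V}

lemma mono_s14 {A B : Finset V} (hAB : A ⊆ B) (hB : IndepSet G B) : IndepSet G A :=
  fun u hu w hw => hB u (hAB hu) w (hAB hw)

lemma card_le_alpha [Fintype V] {A : Finset V} (hA : IndepSet G A) : A.card ≤ alpha G := by
  classical
  exact le_sup (f := Finset.card) (mem_filter.2 ⟨mem_powerset.2 (subset_univ A), hA⟩)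

variable (G)

lemma empty : IndepSet G ∅ := by
  simp [IndepSet]

lemma singleton (v : V) : IndepSet G {v} := by
  simp [IndepSet]

end IndepSet

namespace W2

variable {V : Type*} [Fintype V] {G : SimpleGraph V}

lemma two_mul_alpha_le_card (h : W2 G) : 2 * alpha G ≤ Fintype.card V := by
  classical
  obtain ⟨S₁, -, S₂, -, -, -, hS₁, hS₂, hdisj, -, -⟩ :=
    h ∅ (empty_subset _) ∅ (empty_subset _) (.empty G) (.empty G) (disjoint_empty_left _)
  calc 2 * alpha G = (S₁ ∪ S₂).card := by
        rw [card_union_of_disjoint hdisj, hS₁, hS₂, alpha]; ring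
    _ ≤ Fintype.card V := card_le_univ _

lemma card_eq_alpha_of_indepSet_compl [DecidableEq V] (h : W2 G) {X : Finset V}
    (hX : IndepSet G X) (hXc : IndepSet G Xᶜ) : X.card = alpha G := by
  have := h.two_mul_alpha_le_card
  have := card_add_card_compl X
  have := hX.card_le_alpha
  have := hXc.card_le_alpha
  omega

lemma exists_neighborSet_subset_singleton [DecidableEq V] (h : W2 G) {X : Finset V}
    (hX : IndepSet G X) (hXc : IndepSet G Xᶜ) {v : V} (hv : v ∈ X) :
    ∃ y ∉ X, G.neighborSet y ⊆ {v} := by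
  obtain ⟨S₁, -, S₂, -, -, hS₂, -, hS₂α, hdisj, hvS₁, hXS₂⟩ :=
    h {v} (subset_univ _) (X.erase v) (subset_univ _) (.singleton G v)
      (hX.mono_s14 (erase_subset v X)) (by simp)
  have hvS₂ : v ∉ S₂ := disjoint_left.1 hdisj (hvS₁ (mem_singleton_self v))
  obtain ⟨y, hyS₂, hyX⟩ : ∃ y ∈ S₂, y ∉ X := by
    refine not_subset.1 fun hS₂X => ?_
    have : S₂.card ≤ (X.erase v).card :=
      card_le_card fun w hw => mem_erase.2 ⟨ne_of_mem_of_not_mem hw hvS₂, hS₂X hw⟩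
    have : X.card = alphaOn G univ := h.card_eq_alpha_of_indepSet_compl hX hXc
    have := card_erase_add_one hv
    omega
  refine ⟨y, hyX, fun z hyz => ?_⟩
  have hzX : z ∈ X := by
    by_contra hzX
    exact hXc y (mem_compl.2 hyX) z (mem_compl.2 hzX) hyz
  by_contra hzv
  exact hS₂ y hyS₂ z (hXS₂ (mem_erase.2 ⟨hzv, hzX⟩)) hyz

end W2

namespace SimpleGraph

variable {V : Type*} {G : SimpleGraph V}

lemma Reachable.mem_of_adj_closed {s : Set V} (hs : ∀ u ∈ s, ∀ w, G.Adj u w → w ∈ s)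
    {u w : V} (huw : G.Reachable u w) (hu : u ∈ s) : w ∈ s := by
  obtain ⟨p⟩ := huw
  induction p with
  | nil => exact hu
  | cons hadj _ ih => exact ih (hs _ hu _ hadj)

lemma nonempty_iso_top_fin_two_of_adj {v y : V} (hvy : G.Adj v y) (hV : ∀ w, w = v ∨ w = y) :
    Nonempty (G ≃g (⊤ : SimpleGraph (Fin 2))) := by
  have hG : G = ⊤ := by
    ext a b
    rcases hV a with rfl | rfl <;> rcases hV b with rfl | rfl <;>
      simp [hvy, hvy.symm, hvy.ne, hvy.ne.symm]
  have hcard : Nat.card V = 2 :=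
    Nat.card_eq_two_iff.2 ⟨v, y, hvy.ne, Set.eq_univ_of_forall fun w => by simpa using hV w⟩
  have : Finite V := Nat.finite_of_card_ne_zero (by simp [hcard])
  subst hG
  exact ⟨Iso.completeGraph (Finite.equivFinOfCardEq hcard)⟩

end SimpleGraph

/-- K₂ is the only connected bipartite graph in W₂. -/
theorem stmt14 {V : Type*} [Fintype V] [DecidableEq V] (G : SimpleGraph V)
    (hconn : G.Connected)
    (hbip : ∃ X : Finset V, IndepSet G X ∧ IndepSet G Xᶜ)
    (h : W2 G) :
    Nonempty (G ≃g (⊤ : SimpleGraph (Fin 2))) := by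
  obtain ⟨X, hX, hXc⟩ := hbip
  obtain ⟨v₀⟩ := hconn.nonempty
  have hα : 0 < alpha G := (IndepSet.singleton G v₀).card_le_alpha
  obtain ⟨v, hv⟩ : X.Nonempty := card_pos.1 (h.card_eq_alpha_of_indepSet_compl hX hXc ▸ hα)
  obtain ⟨y, hyX, hy⟩ := h.exists_neighborSet_subset_singleton hX hXc hv
  obtain ⟨x, -, hx⟩ :=
    h.exists_neighborSet_subset_singleton hXc (by rwa [compl_compl]) (mem_compl.2 hyX)
  have : Nontrivial V := ⟨⟨v, y, ne_of_mem_of_not_mem hv hyX⟩⟩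
  have hyv : G.Adj y v := by
    obtain ⟨z, hyz⟩ := hconn.preconnected.exists_adj_of_nontrivial y
    rwa [← hy hyz]
  have hxv : x = v := by
    obtain ⟨z, hxz⟩ := hconn.preconnected.exists_adj_of_nontrivial x
    exact hy (hx hxz ▸ hxz).symm
  subst hxv
  refine SimpleGraph.nonempty_iso_top_fin_two_of_adj hyv.symm fun w =>
    (hconn.preconnected x w).mem_of_adj_closed (s := {x, y}) ?_ (Set.mem_insert x _)
  rintro u (rfl | rfl) w huw
  · exact Or.inr (hx huw)
  · exact Or.inl (hy huw)
end

section
/- A vertex v of a graph G is a shedding vertex if and only if ε_{G−v}(A) = ε_G(A) for every independent set A of G − v, where ε_H(A) is the maximum size of an independent set of H containing A. -/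
open Finset

/-- v is a shedding vertex of G: every independent set of G - N[v] can be enlarged by a
neighbor of v. -/
def Shedding {V : Type*} [DecidableEq V] (G : SimpleGraph V) (v : V) : Prop :=
  ∀ S : Finset V, IndepSet G S → (∀ x ∈ S, x ≠ v ∧ ¬ G.Adj v x) →
    ∃ u, G.Adj v u ∧ IndepSet G (insert u S)

open scoped Classical in
/-- ε: for a vertex subset `s` and an independent set `A ⊆ s`, the maximum size of an
independent set S with A ⊆ S ⊆ s. -/
noncomputable def epsOn {V : Type*} [Fintype V] (G : SimpleGraph V) (s A : Finset V) : ℕ :=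
  ((s.powerset).filter (fun S => IndepSet G S ∧ A ⊆ S)).sup Finset.card

/-! If a largest independent set of `G` through `A` contains `v`, the shedding property trades `v`
for a neighbour `u` of `v`, giving an independent set of `G - v` of the same size; so deleting `v`
does not lower `ε`. Conversely, let `S` avoid `N[v]` and let `T` be a largest independent set of
`G - v` through `S`. If no neighbour of `v` extends `S`, then `T` meets no neighbour of `v`, and
`T ∪ {v}` is an independent set of `G` through `S` that is larger than `ε_{G-v}(S)`. -/

section

variable {V : Type*} {G : SimpleGraph V}

lemma IndepSet.mono_s15 {S T : Finset V} (hT : IndepSet G T) (h : S ⊆ T) : IndepSet G S :=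
  fun a ha b hb => hT a (h ha) b (h hb)

lemma indepSet_insert [DecidableEq V] {v : V} {S : Finset V} :
    IndepSet G (insert v S) ↔ IndepSet G S ∧ ∀ x ∈ S, ¬ G.Adj v x := by
  refine ⟨fun h => ⟨h.mono_s15 (subset_insert v S),
    fun x hx => h v (mem_insert_self v S) x (mem_insert_of_mem hx)⟩, ?_⟩
  rintro ⟨hS, hv⟩ a ha b hb hab
  rcases mem_insert.1 ha with rfl | haS <;> rcases mem_insert.1 hb with rfl | hbS
  · exact G.irrefl hab
  · exact hv b hbS hab
  · exact hv a haS hab.symm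
  · exact hS a haS b hbS hab

lemma Shedding.exists_insert_erase [DecidableEq V] {v : V} {S : Finset V} (hv : Shedding G v)
    (hS : IndepSet G S) (hvS : v ∈ S) :
    ∃ u ∉ S, u ≠ v ∧ IndepSet G (insert u (S.erase v)) := by
  have hfar : ∀ x ∈ S.erase v, x ≠ v ∧ ¬ G.Adj v x := fun x hx =>
    ⟨ne_of_mem_erase hx, hS v hvS x (mem_of_mem_erase hx)⟩
  obtain ⟨u, hvu, hu⟩ := hv (S.erase v) (hS.mono_s15 (erase_subset v S)) hfar
  exact ⟨u, fun huS => hS v hvS u huS hvu, hvu.ne', hu⟩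

variable [Fintype V]

lemma card_le_epsOn {s A S : Finset V} (hSs : S ⊆ s) (hS : IndepSet G S) (hAS : A ⊆ S) :
    S.card ≤ epsOn G s A := by
  classical
  exact le_sup (f := card) (mem_filter.2 ⟨mem_powerset.2 hSs, hS, hAS⟩)

lemma exists_card_eq_epsOn {s A : Finset V} (hAs : A ⊆ s) (hA : IndepSet G A) :
    ∃ S ⊆ s, IndepSet G S ∧ A ⊆ S ∧ S.card = epsOn G s A := by
  classical
  obtain ⟨S, hS, hcard⟩ :=
    exists_mem_eq_sup (s.powerset.filter fun S => IndepSet G S ∧ A ⊆ S)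
      ⟨A, mem_filter.2 ⟨mem_powerset.2 hAs, hA, Subset.refl A⟩⟩ card
  rw [mem_filter, mem_powerset] at hS
  exact ⟨S, hS.1, hS.2.1, hS.2.2, hcard.symm⟩

lemma epsOn_mono {s t : Finset V} (A : Finset V) (h : s ⊆ t) : epsOn G s A ≤ epsOn G t A := by
  classical
  exact sup_mono (filter_subset_filter _ (powerset_mono.2 h))

variable [DecidableEq V] {v : V}

lemma Shedding.epsOn_erase_eq {A : Finset V} (hv : Shedding G v) (hA : A ⊆ univ.erase v)
    (hAi : IndepSet G A) : epsOn G (univ.erase v) A = epsOn G univ A := by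
  refine le_antisymm (epsOn_mono A (erase_subset v univ)) ?_
  obtain ⟨S, -, hS, hAS, hcard⟩ := exists_card_eq_epsOn (subset_univ A) hAi
  rw [← hcard]
  by_cases hvS : v ∈ S
  · obtain ⟨u, huS, huv, hu⟩ := hv.exists_insert_erase hS hvS
    have hAu : A ⊆ insert u (S.erase v) := fun x hx =>
      mem_insert_of_mem (mem_erase.2 ⟨ne_of_mem_erase (hA hx), hAS hx⟩)
    have hsub : insert u (S.erase v) ⊆ univ.erase v :=
      insert_subset (mem_erase.2 ⟨huv, mem_univ u⟩) (erase_subset_erase v (subset_univ S))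
    calc S.card = (insert u (S.erase v)).card := by
          rw [card_insert_of_notMem (fun h => huS (mem_of_mem_erase h)),
            card_erase_add_one hvS]
      _ ≤ _ := card_le_epsOn hsub hu hAu
  · exact card_le_epsOn (subset_erase.2 ⟨subset_univ S, hvS⟩) hS hAS

lemma shedding_of_epsOn_erase_eq
    (h : ∀ A ⊆ univ.erase v, IndepSet G A → epsOn G (univ.erase v) A = epsOn G univ A) :
    Shedding G v := by
  intro S hS hfar
  have hSv : S ⊆ univ.erase v := fun x hx => mem_erase.2 ⟨(hfar x hx).1, mem_univ x⟩
  obtain ⟨T, hTv, hT, hST, hcard⟩ := exists_card_eq_epsOn hSv hS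
  by_contra! hno
  have hTfar : ∀ x ∈ T, ¬ G.Adj v x := fun x hx hvx =>
    hno x hvx (hT.mono_s15 (insert_subset hx hST))
  have hvT : v ∉ T := fun hvT => (mem_erase.1 (hTv hvT)).1 rfl
  have hbig := card_le_epsOn (subset_univ _) (indepSet_insert.2 ⟨hT, hTfar⟩)
    (hST.trans (subset_insert v T))
  rw [card_insert_of_notMem hvT, ← h S hSv hS, ← hcard] at hbig
  omega

end

/-- v is a shedding vertex iff ε is unchanged by deleting v, on every independent set of
G - v. -/
theorem stmt15 {V : Type*} [Fintype V] [DecidableEq V] (G : SimpleGraph V) (v : V) :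
    Shedding G v ↔
      ∀ A ⊆ Finset.univ.erase v, IndepSet G A →
        epsOn G (Finset.univ.erase v) A = epsOn G Finset.univ A :=
  ⟨fun hv _ hA hAi => hv.epsOn_erase_eq hA hAi, shedding_of_epsOn_erase_eq⟩
end

section
/- Let G be a graph and let L be the corona of G with a family {H_v : v ∈ V(G)} of complete graphs each having at least two vertices. Then for every non-maximum independent set A of L and every vertex b ∉ A, there exists a maximum independent set S of L with A ⊆ S and b ∉ S. -/
open Finset

/-- The corona of G with the family of complete graphs {K_{p v} : v ∈ V(G)}: the disjoint
union of G and the complete graphs, with each v joined to all vertices of its K_{p v}. -/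
def Corona {V : Type*} (G : SimpleGraph V) (p : V → ℕ) :
    SimpleGraph (V ⊕ (Σ v : V, Fin (p v))) :=
  SimpleGraph.fromRel (fun a b =>
    match a, b with
    | Sum.inl u, Sum.inl w => G.Adj u w
    | Sum.inl u, Sum.inr w => u = w.1
    | Sum.inr u, Sum.inr w => u.1 = w.1
    | Sum.inr _, Sum.inl _ => False)

/-!
The vertex sets `{v} ∪ V(K_{p v})` are cliques partitioning the corona, so an independent set
meets each at most once and `α = |V(G)|`. To extend `A` while avoiding `b`, add to every clique
that `A` misses a vertex of `K_{p v}` other than `b` (there is one since `p v ≥ 2`); such a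
vertex has no neighbours outside its own clique.
-/

theorem IndepSet.card_le_alpha_s17 {W : Type*} [Fintype W] {H : SimpleGraph W} {A : Finset W}
    (hA : IndepSet H A) : A.card ≤ alpha H := by
  classical
  exact le_sup (f := card) (mem_filter.2 ⟨mem_powerset.2 (subset_univ A), hA⟩)

theorem alpha_le_of_forall_card_le {W : Type*} [Fintype W] {H : SimpleGraph W} {n : ℕ}
    (h : ∀ A, IndepSet H A → A.card ≤ n) : alpha H ≤ n := by
  classical
  exact Finset.sup_le fun A hA => h A (mem_filter.1 hA).2

section Corona

variable {V : Type*} {p : V → ℕ} {G : SimpleGraph V}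

/-- The vertex `v` of `G` whose clique `{v} ∪ V(K_{p v})` contains `x`. -/
def coronaRoot : V ⊕ (Σ v : V, Fin (p v)) → V := Sum.elim id Sigma.fst

theorem corona_adj_of_coronaRoot_eq {x y : V ⊕ (Σ v : V, Fin (p v))} (hne : x ≠ y)
    (h : coronaRoot x = coronaRoot y) : (Corona G p).Adj x y := by
  rw [Corona, SimpleGraph.fromRel_adj]
  rcases x with u | ⟨u, i⟩ <;> rcases y with w | ⟨w, j⟩ <;> simp_all [coronaRoot]

theorem coronaRoot_eq_of_corona_adj_inr {w : Σ v : V, Fin (p v)} {y : V ⊕ (Σ v : V, Fin (p v))}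
    (h : (Corona G p).Adj (Sum.inr w) y) : coronaRoot y = w.1 := by
  rw [Corona, SimpleGraph.fromRel_adj] at h
  rcases y with u | ⟨u, j⟩ <;> simp_all [coronaRoot, eq_comm]

theorem exists_inr_ne {v : V} (hp : 2 ≤ p v) (b : V ⊕ (Σ v : V, Fin (p v))) :
    ∃ i : Fin (p v), (Sum.inr ⟨v, i⟩ : V ⊕ (Σ v : V, Fin (p v))) ≠ b := by
  by_contra! h
  have h01 := (h ⟨0, by omega⟩).trans (h ⟨1, by omega⟩).symm
  simp at h01

namespace IndepSet

theorem injOn_coronaRoot {A : Finset (V ⊕ (Σ v : V, Fin (p v)))}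
    (hA : IndepSet (Corona G p) A) : Set.InjOn coronaRoot (A : Set (V ⊕ (Σ v : V, Fin (p v)))) :=
  fun x hx y hy h => by_contra fun hne => hA x hx y hy (corona_adj_of_coronaRoot_eq hne h)

variable [Fintype V]

theorem card_le_of_corona {A : Finset (V ⊕ (Σ v : V, Fin (p v)))}
    (hA : IndepSet (Corona G p) A) : A.card ≤ Fintype.card V := by
  classical
  rw [← card_image_of_injOn hA.injOn_coronaRoot]
  exact card_le_univ _

theorem card_eq_of_corona {A : Finset (V ⊕ (Σ v : V, Fin (p v)))}
    (hA : IndepSet (Corona G p) A) (hcover : ∀ v, ∃ x ∈ A, coronaRoot x = v) :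
    A.card = Fintype.card V := by
  classical
  rw [← card_image_of_injOn hA.injOn_coronaRoot, ← card_univ]
  congr
  exact eq_univ_of_forall fun v => mem_image.2 (hcover v)

theorem exists_corona_superset (hp : ∀ v, 2 ≤ p v) {A : Finset (V ⊕ (Σ v : V, Fin (p v)))}
    (hA : IndepSet (Corona G p) A) {b : V ⊕ (Σ v : V, Fin (p v))} (hb : b ∉ A) :
    ∃ S, IndepSet (Corona G p) S ∧ A ⊆ S ∧ b ∉ S ∧ ∀ v, ∃ x ∈ S, coronaRoot x = v := by
  classical
  choose c hc using fun v => exists_inr_ne (hp v) b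
  set T := (univ.filter fun v => ∀ a ∈ A, coronaRoot a ≠ v).image
    fun v => (Sum.inr ⟨v, c v⟩ : V ⊕ (Σ v : V, Fin (p v)))
  have hT : ∀ x ∈ T, ∀ y ∈ A ∪ T, ¬ (Corona G p).Adj x y := by
    intro x hx y hy hxy
    obtain ⟨v, hv, rfl⟩ := mem_image.1 hx
    have hroot := coronaRoot_eq_of_corona_adj_inr hxy
    rcases mem_union.1 hy with hyA | hyT
    · exact (mem_filter.1 hv).2 y hyA hroot
    · obtain ⟨w, -, rfl⟩ := mem_image.1 hyT
      obtain rfl : w = v := hroot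
      exact (Corona G p).loopless.irrefl _ hxy
  refine ⟨A ∪ T, ?indep, subset_union_left, ?notMem, ?cover⟩
  case indep =>
    intro x hx y hy
    by_cases hxT : x ∈ T
    · exact hT x hxT y hy
    by_cases hyT : y ∈ T
    · exact fun hxy => hT y hyT x hx hxy.symm
    exact hA x (by simpa [hxT] using hx) y (by simpa [hyT] using hy)
  case notMem =>
    simp only [mem_union, hb, false_or, T, mem_image]
    rintro ⟨v, -, hv⟩
    exact hc v hv
  case cover =>
    intro v
    by_cases hv : ∃ a ∈ A, coronaRoot a = v
    · obtain ⟨a, ha, rfl⟩ := hv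
      exact ⟨a, mem_union_left _ ha, rfl⟩
    · push Not at hv
      exact ⟨_, mem_union_right _ (mem_image_of_mem _ (mem_filter.2 ⟨mem_univ v, hv⟩)), rfl⟩

end IndepSet

end Corona

theorem stmt17_general {V : Type*} [Fintype V] (G : SimpleGraph V)
    (p : V → ℕ) (hp : ∀ v, 2 ≤ p v) :
    ∀ A : Finset (V ⊕ (Σ v : V, Fin (p v))), IndepSet (Corona G p) A →
      A.card < alpha (Corona G p) →
      ∀ b ∉ A, ∃ S : Finset (V ⊕ (Σ v : V, Fin (p v))),
        IndepSet (Corona G p) S ∧ S.card = alpha (Corona G p) ∧ A ⊆ S ∧ b ∉ S := by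
  intro A hA _ b hb
  obtain ⟨S, hS, hAS, hbS, hcover⟩ := hA.exists_corona_superset hp hb
  have hcard : S.card = Fintype.card V := hS.card_eq_of_corona hcover
  have halpha : alpha (Corona G p) = Fintype.card V :=
    le_antisymm (alpha_le_of_forall_card_le fun _ hB => hB.card_le_of_corona)
      (hcard ▸ hS.card_le_alpha_s17)
  exact ⟨S, hS, hcard.trans halpha.symm, hAS, hbS⟩

/-- In the corona of G with complete graphs of order ≥ 2, every non-maximum independent
set A and vertex b ∉ A admit a maximum independent set S with A ⊆ S, b ∉ S. -/
theorem stmt17 {V : Type*} [Fintype V] [DecidableEq V] (G : SimpleGraph V)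
    (p : V → ℕ) (hp : ∀ v, 2 ≤ p v) :
    ∀ A : Finset (V ⊕ (Σ v : V, Fin (p v))), IndepSet (Corona G p) A →
      A.card < alpha (Corona G p) →
      ∀ b ∉ A, ∃ S : Finset (V ⊕ (Σ v : V, Fin (p v))),
        IndepSet (Corona G p) S ∧ S.card = alpha (Corona G p) ∧ A ⊆ S ∧ b ∉ S :=
  stmt17_general G p hp
end
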